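/- Let optcost(n) be the minimum total sum of completion times for scheduling n unit jobs in the list 1-batch problem (setup time 1 per batch). Then optcost(n) = F(n) for all n ≥ 0, where F(m(m+1)/2 + k) = m(m+1)(m+2)(3m+5)/24 + k(n+m-k+1) + k(k+1)/2 for n = m(m+1)/2 + k, 0 ≤ k ≤ m+1. -/

import Mathlib

/-- Cost of a list of batch sizes, where `i` batches have already been scheduled
and `t` jobs already processed: batch `b` completes at time `i + 1 + t + b`. -/
def batchCostAux : ℕ → ℕ → List ℕ → ℕ
  | _, _, [] => 0
  | i, t, b :: rest => b * (i + 1 + t + b) + batchCostAux (i + 1) (t + b) rest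

/-- Total cost of a composition `l = (b_1, ..., b_r)`:  `Σ_i b_i (i + Σ_{j ≤ i} b_j)`. -/
def batchCost (l : List ℕ) : ℕ := batchCostAux 0 0 l

/-- Minimum sum of completion times for `n` unit jobs in the list 1-batch problem. -/
noncomputable def optcost (n : ℕ) : ℕ :=
  sInf {c | ∃ l : List ℕ, (∀ b ∈ l, 0 < b) ∧ l.sum = n ∧ batchCost l = c}

/-- The closed form value for `n = m (m+1)/2 + k`:
`F(n) = m(m+1)(m+2)(3m+5)/24 + k (n + m - k + 1) + k(k+1)/2`. -/
def Fval (m k : ℕ) : ℕ :=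
  m * (m + 1) * (m + 2) * (3 * m + 5) / 24
    + k * (m * (m + 1) / 2 + k + m - k + 1) + k * (k + 1) / 2

/-- The unique `m` with `m(m+1)/2 ≤ n < (m+1)(m+2)/2`. -/
def triIdx (n : ℕ) : ℕ := (Nat.sqrt (8 * n + 1) - 1) / 2

/-- `F n`, computed via the triangular decomposition of `n`. -/
def F (n : ℕ) : ℕ := Fval (triIdx n) (n - triIdx n * (triIdx n + 1) / 2)

/-!
Peeling off the first batch gives `batchCost (b :: l) = (1 + b) * n + batchCost l` for `n = b + l.sum`,
so `optcost` solves the Bellman recursion `f 0 = 0`, `f n = min_{1 ≤ b ≤ n} ((1 + b) * n + f (n - b))`,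
and it suffices to check that `F` solves it too. Write `n = m(m+1)/2 + k` with `1 ≤ k ≤ m + 1`.
The minimum is attained at `b = m`, which moves `n` to the same position `k` of the previous row.
That no `b` does better is shown by induction on `b`: `F n - F (n - 1) = n + m + 1`, which settles
`b ≥ m`; for `b < m`, `n - b` lies in row `m` or `m - 1`, and the inequality reduces to
`x (x + 1) ≥ 0` for the integer `x = m - b`.
-/

theorem batchCostAux_eq (l : List ℕ) (i t : ℕ) :
    batchCostAux i t l = batchCost l + (i + t) * l.sum := by
  induction l generalizing i t with
  | nil => rfl
  | cons b l ih =>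
    simp only [batchCost, batchCostAux, List.sum_cons, ih (i + 1) (t + b), ih (0 + 1) (0 + b)]
    ring

theorem batchCost_cons (b : ℕ) (l : List ℕ) :
    batchCost (b :: l) = (1 + b) * (b + l.sum) + batchCost l := by
  rw [batchCost, batchCostAux, batchCostAux_eq]
  ring

section Bellman

variable {f : ℕ → ℕ}

theorem apply_sum_le_batchCost (h0 : f 0 = 0)
    (hle : ∀ a b, f (a + b) ≤ (1 + b) * (a + b) + f a) :
    ∀ l : List ℕ, f l.sum ≤ batchCost l
  | [] => h0.le
  | b :: l => by
    have hl := apply_sum_le_batchCost h0 hle l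
    have hstep := hle l.sum b
    rw [add_comm l.sum b] at hstep
    rw [batchCost_cons, List.sum_cons]
    omega

theorem exists_batchCost_eq (h0 : f 0 = 0)
    (hattain : ∀ n, 0 < n → ∃ a b, 0 < b ∧ a + b = n ∧ f n = (1 + b) * n + f a) (n : ℕ) :
    ∃ l : List ℕ, (∀ b ∈ l, 0 < b) ∧ l.sum = n ∧ batchCost l = f n := by
  induction n using Nat.strong_induction_on with
  | _ n ih =>
    rcases n.eq_zero_or_pos with rfl | hn
    · exact ⟨[], by simp, rfl, h0.symm⟩
    obtain ⟨a, b, hb, rfl, hfn⟩ := hattain n hn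
    obtain ⟨l, hpos, hsum, hcost⟩ := ih a (by omega)
    refine ⟨b :: l, by simpa [hb] using hpos, by rw [List.sum_cons, hsum, add_comm], ?_⟩
    rw [batchCost_cons, hsum, hcost, hfn, add_comm b]

theorem optcost_eq_of_bellman (h0 : f 0 = 0)
    (hle : ∀ a b, f (a + b) ≤ (1 + b) * (a + b) + f a)
    (hattain : ∀ n, 0 < n → ∃ a b, 0 < b ∧ a + b = n ∧ f n = (1 + b) * n + f a) (n : ℕ) :
    optcost n = f n := by
  refine IsLeast.csInf_eq ⟨exists_batchCost_eq h0 hattain n, ?_⟩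
  rintro _ ⟨l, -, rfl, rfl⟩
  exact apply_sum_le_batchCost h0 hle l

end Bellman

theorem tri_succ (m : ℕ) : (m + 1) * (m + 1 + 1) / 2 = m * (m + 1) / 2 + (m + 1) := by
  have h := Nat.triangle_succ (m + 1)
  simp only [Nat.add_sub_cancel] at h
  rw [mul_comm, h, mul_comm]

theorem exists_eq_tri_add (n : ℕ) : ∃ m k, k ≤ m ∧ n = m * (m + 1) / 2 + k := by
  induction n with
  | zero => exact ⟨0, 0, le_rfl, rfl⟩
  | succ n ih =>
    obtain ⟨m, k, hk, rfl⟩ := ih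
    rcases hk.lt_or_eq with hk | rfl
    · exact ⟨m, k + 1, hk, rfl⟩
    · exact ⟨k + 1, 0, Nat.zero_le _, by rw [tri_succ]; rfl⟩

theorem triIdx_tri_add {m k : ℕ} (hk : k ≤ m) : triIdx (m * (m + 1) / 2 + k) = m := by
  have htri : 2 * (m * (m + 1) / 2) = m * (m + 1) :=
    Nat.two_mul_div_two_of_even (Nat.even_mul_succ_self m)
  have hlo : 2 * m + 1 ≤ Nat.sqrt (8 * (m * (m + 1) / 2 + k) + 1) := Nat.le_sqrt.2 (by nlinarith)
  have hhi : Nat.sqrt (8 * (m * (m + 1) / 2 + k) + 1) < 2 * m + 3 := Nat.sqrt_lt.2 (by nlinarith)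
  unfold triIdx
  omega

theorem cast_tri (m : ℕ) : ((m * (m + 1) / 2 : ℕ) : ℚ) = m * (m + 1) / 2 := by
  rw [Nat.cast_div_charZero (Nat.even_mul_succ_self m).two_dvd]
  push_cast
  ring

theorem dvd_Fval_leading (m : ℕ) : 24 ∣ m * (m + 1) * (m + 2) * (3 * m + 5) := by
  induction m with
  | zero => norm_num
  | succ m ih =>
    obtain ⟨t, ht⟩ := (Nat.even_mul_succ_self (m + 1)).two_dvd
    have step : (m + 1) * (m + 1 + 1) * (m + 1 + 2) * (3 * (m + 1) + 5)
        = m * (m + 1) * (m + 2) * (3 * m + 5) + 12 * ((m + 1) * (m + 1 + 1)) * (m + 2) := by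
      ring
    rw [step, ht]
    exact dvd_add ih ⟨t * (m + 2), by ring⟩

theorem cast_Fval (m k : ℕ) :
    (Fval m k : ℚ) = m * (m + 1) * (m + 2) * (3 * m + 5) / 24
      + k * (m * (m + 1) / 2 + m + 1) + k * (k + 1) / 2 := by
  have hsub : m * (m + 1) / 2 + k + m - k = m * (m + 1) / 2 + m := by omega
  rw [Fval, hsub]
  push_cast [Nat.cast_div_charZero (dvd_Fval_leading m),
    Nat.cast_div_charZero (Nat.even_mul_succ_self k).two_dvd, cast_tri]
  ring

theorem Int.mul_add_one_nonneg (x : ℤ) : 0 ≤ x * (x + 1) := by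
  rcases le_or_gt 0 x with hx | hx <;> nlinarith

theorem Fval_succ_zero (m : ℕ) : Fval (m + 1) 0 = Fval m (m + 1) := by
  rw [← Nat.cast_inj (R := ℚ), cast_Fval, cast_Fval]
  push_cast
  ring

theorem Fval_succ_right (m k : ℕ) :
    Fval m (k + 1) = Fval m k + (m * (m + 1) / 2 + (k + 1)) + m + 1 := by
  rw [← Nat.cast_inj (R := ℚ)]
  push_cast [cast_Fval, cast_tri]
  ring

theorem Fval_succ_left (m k : ℕ) :
    Fval (m + 1) k = (m + 2) * ((m + 1) * (m + 1 + 1) / 2 + k) + Fval m k := by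
  rw [← Nat.cast_inj (R := ℚ)]
  push_cast [cast_Fval, cast_tri]
  ring

theorem Fval_add_le (m c b : ℕ) :
    Fval m (c + b) ≤ (1 + b) * (m * (m + 1) / 2 + (c + b)) + Fval m c := by
  rw [← Nat.cast_le (α := ℚ)]
  have hx : (0 : ℚ) ≤ (m - b) * (m - b + 1) := by exact_mod_cast Int.mul_add_one_nonneg (m - b)
  have hc : (0 : ℚ) ≤ c := c.cast_nonneg
  push_cast [cast_Fval, cast_tri]
  linear_combination (1 / 2 : ℚ) * hx + hc

theorem Fval_succ_le_of_add_eq {m k c b : ℕ} (h : c + b = m + 1 + k) :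
    Fval (m + 1) k ≤ (1 + b) * ((m + 1) * (m + 1 + 1) / 2 + k) + Fval m c := by
  rw [← Nat.cast_le (α := ℚ)]
  have hc : (c : ℚ) = m + 1 + k - b := by
    rw [eq_sub_iff_add_eq]
    exact_mod_cast h
  have hx : (0 : ℚ) ≤ (m + 1 - b) * (m + 1 - b + 1) := by
    exact_mod_cast Int.mul_add_one_nonneg (m + 1 - b)
  push_cast [cast_Fval, cast_tri]
  rw [hc]
  linear_combination (1 / 2 : ℚ) * hx

theorem F_tri_add {m k : ℕ} (hk : k ≤ m + 1) : F (m * (m + 1) / 2 + k) = Fval m k := by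
  rcases hk.lt_or_eq with hk | rfl
  · rw [F, triIdx_tri_add (Nat.le_of_lt_succ hk), Nat.add_sub_cancel_left]
  · have h := triIdx_tri_add (m := m + 1) (Nat.zero_le _)
    rw [← Fval_succ_zero, ← tri_succ, ← add_zero ((m + 1) * (m + 1 + 1) / 2), F, h,
      Nat.add_sub_cancel_left]

theorem F_tri_add_succ {m k : ℕ} (hk : k ≤ m) :
    F (m * (m + 1) / 2 + k + 1) = F (m * (m + 1) / 2 + k) + (m * (m + 1) / 2 + k + 1) + m + 1 := by
  rw [add_assoc, F_tri_add (by omega), F_tri_add (by omega), Fval_succ_right]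

theorem F_add_le (a b : ℕ) : F (a + b) ≤ (1 + b) * (a + b) + F a := by
  induction b with
  | zero => simp
  | succ b ih =>
    obtain ⟨m, k, hk, hab⟩ := exists_eq_tri_add (a + b)
    rcases le_or_gt m b with hmb | hbm
    · have hstep := F_tri_add_succ hk
      rw [← hab] at hstep
      rw [← add_assoc, hstep]
      nlinarith
    rcases le_or_gt b k with hbk | hkb
    · obtain ⟨c, rfl⟩ := Nat.exists_eq_add_of_le' hbk
      have ha : a = m * (m + 1) / 2 + c := by omega
      rw [← add_assoc, hab, ha, add_assoc, add_assoc, F_tri_add (by omega), F_tri_add (by omega)]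
      exact Fval_add_le m c (b + 1)
    · obtain ⟨M, rfl⟩ : ∃ M, m = M + 1 := ⟨m - 1, by omega⟩
      have ha : a = M * (M + 1) / 2 + (M + 1 + k - b) := by
        rw [tri_succ] at hab
        omega
      rw [← add_assoc, hab, ha, add_assoc, F_tri_add (by omega), F_tri_add (by omega)]
      exact Fval_succ_le_of_add_eq (by omega)

theorem F_attained (n : ℕ) (hn : 0 < n) :
    ∃ a b, 0 < b ∧ a + b = n ∧ F n = (1 + b) * n + F a := by
  obtain ⟨m, k, hk, rfl⟩ := exists_eq_tri_add n
  rcases m with _ | M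
  · omega
  refine ⟨M * (M + 1) / 2 + k, M + 1, M.succ_pos, by rw [tri_succ]; ring, ?_⟩
  rw [F_tri_add (by omega), F_tri_add (by omega), Fval_succ_left, add_comm 1]

/-- `optcost n = F n`: for `n = m(m+1)/2 + k` with `0 ≤ k ≤ m+1`, the optimal
offline cost equals the closed form. -/
theorem optcost_eq_F (n m k : ℕ) (hk : k ≤ m + 1) (hn : n = m * (m + 1) / 2 + k) :
    optcost n = Fval m k := by
  rw [optcost_eq_of_bellman rfl F_add_le F_attained, hn, F_tri_add hk]
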